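/- Let H(x,y) = y²/2 + x²/2 + x⁴/4. Then (8x²y² − 4Hx² − x² − y²)·(−3xy·dH + d(xy³)) = (−32/5·x²y⁵ + 8H·x²y³ + 2x²y³ − 2/5·y⁵)·dx + (12H·x³y − 20x³y³ + 3x³y + 3xy³)·dH + dR for some polynomial R(x,y), where H denotes the polynomial y²/2 + x²/2 + x⁴/4 wherever it appears. -/
import Mathlib

noncomputable def pdx (F : ℝ → ℝ → ℝ) (x y : ℝ) : ℝ := deriv (fun t => F t y) x
noncomputable def pdy (F : ℝ → ℝ → ℝ) (x y : ℝ) : ℝ := deriv (fun t => F x t) y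

noncomputable def H (x y : ℝ) : ℝ := y^2/2 + x^2/2 + x^4/4

noncomputable def Rx (R : MvPolynomial (Fin 2) ℝ) (x y : ℝ) : ℝ :=
  MvPolynomial.eval ![x, y] (MvPolynomial.pderiv 0 R)

noncomputable def Ry (R : MvPolynomial (Fin 2) ℝ) (x y : ℝ) : ℝ :=
  MvPolynomial.eval ![x, y] (MvPolynomial.pderiv 1 R)

open MvPolynomial in
/-- The potential R(x,y) = -3/5·xy⁵ - x³y³ + 14/5·x³y⁵ - 2x⁵y³ - x⁷y³. -/
noncomputable def Rpoly : MvPolynomial (Fin 2) ℝ :=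
  C (-3/5) * X 0 * X 1^5 - X 0^3 * X 1^3 + C (14/5) * X 0^3 * X 1^5
    - C 2 * X 0^5 * X 1^3 - X 0^7 * X 1^3

lemma pdx_H (x y : ℝ) : pdx H x y = x + x^3 := by
  have h : HasDerivAt (fun t : ℝ => y^2/2 + t^2/2 + t^4/4)
      (0 + (↑2*x^1)/2 + (↑4*x^3)/4) x :=
    ((hasDerivAt_const x _).add ((hasDerivAt_pow 2 x).div_const 2)).add
      ((hasDerivAt_pow 4 x).div_const 4)
  rw [pdx]; simp only [H]; rw [h.deriv]; ring

lemma pdy_H (x y : ℝ) : pdy H x y = y := by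
  have h : HasDerivAt (fun t : ℝ => t^2/2 + x^2/2 + x^4/4) ((↑2*y^1)/2 + 0 + 0) y :=
    (((hasDerivAt_pow 2 y).div_const 2).add (hasDerivAt_const y _)).add (hasDerivAt_const y _)
  rw [pdy]; simp only [H]; rw [h.deriv]; ring

lemma pdx_xy3 (x y : ℝ) : pdx (fun x y => x * y^3) x y = y^3 := by
  rw [pdx]; simp

lemma pdy_xy3 (x y : ℝ) : pdy (fun x y => x * y^3) x y = 3*x*y^2 := by
  have h : HasDerivAt (fun t : ℝ => x * t^3) (x * (↑3*y^2)) y :=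
    (hasDerivAt_pow 3 y).const_mul x
  rw [pdy]; rw [h.deriv]; ring

lemma Rx_Rpoly (x y : ℝ) :
    Rx Rpoly x y = -3/5*y^5 - 3*x^2*y^3 + 42/5*x^2*y^5 - 10*x^4*y^3 - 7*x^6*y^3 := by
  simp [Rx, Rpoly, MvPolynomial.pderiv_X]; ring

lemma Ry_Rpoly (x y : ℝ) :
    Ry Rpoly x y = -3*x*y^4 - 3*x^3*y^2 + 14*x^3*y^4 - 6*x^5*y^2 - 3*x^7*y^2 := by
  simp [Ry, Rpoly, MvPolynomial.pderiv_X]; ring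

/-- Lemma 1(b): (8x²y² − 4Hx² − x² − y²)·(−3xy·dH + d(xy³))
    = (−32/5·x²y⁵ + 8H·x²y³ + 2x²y³ − 2/5·y⁵)·dx
    + (12H·x³y − 20x³y³ + 3x³y + 3xy³)·dH + dR for some polynomial R. -/
theorem rel_exact_b : ∃ R : MvPolynomial (Fin 2) ℝ, ∀ x y : ℝ,
    (8*x^2*y^2 - 4 * H x y * x^2 - x^2 - y^2)
        * ((-3*x*y) * pdx H x y + pdx (fun x y => x * y^3) x y)
      = (-32/5 * x^2 * y^5 + 8 * H x y * x^2 * y^3 + 2 * x^2 * y^3 - 2/5 * y^5)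
        + (12 * H x y * x^3 * y - 20 * x^3 * y^3 + 3 * x^3 * y + 3 * x * y^3) * pdx H x y
        + Rx R x y
  ∧ (8*x^2*y^2 - 4 * H x y * x^2 - x^2 - y^2)
        * ((-3*x*y) * pdy H x y + pdy (fun x y => x * y^3) x y)
      = (12 * H x y * x^3 * y - 20 * x^3 * y^3 + 3 * x^3 * y + 3 * x * y^3) * pdy H x y
        + Ry R x y := by
  refine ⟨Rpoly, fun x y => ⟨?_, ?_⟩⟩
  · rw [pdx_H, pdx_xy3, Rx_Rpoly, H]; ring
  · rw [pdy_H, pdy_xy3, Ry_Rpoly, H]; ring
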